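/- arXiv:2210.14720 — 2 statements merged into one kernel-verified Lean document; each statement's English description precedes it below -/
import Mathlib

section
/- Uniqueness theorem for fractional Fourier coefficients: if f, g ∈ e_{-α}L^1(T^n_α) satisfy F_α(f)(m) = F_α(g)(m) for all m ∈ Z^n, then f = g almost everywhere. -/
/-!
Multiplying by the chirp `e_α` turns the fractional Fourier coefficients of `f` into the ordinary
Fourier coefficients of `e_α f` on the cube of side `|sin α|`, up to the nonzero factor
`A_α^n e_α(m)`. Rescaling the cube onto the unit torus, the difference `e_α (f - g)` becomes an
integrable function orthogonal to every character. By Stone–Weierstrass the characters span a dense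
subspace of the continuous functions, so it is orthogonal to every continuous function, and
approximating indicators of closed sets by continuous functions shows that it vanishes a.e.
-/

open MeasureTheory Filter

noncomputable section

/-- The fractional torus, realized as the cube `[-|sin α|/2, |sin α|/2]^n`. -/
def Tor (α : ℝ) (n : ℕ) : Set (Fin n → ℝ) :=
  Set.univ.pi fun _ => Set.Icc (-(|Real.sin α| / 2)) (|Real.sin α| / 2)

/-- The chirp `e_α(x) = e^{π i |x|² cot α}`. -/
def eA (α : ℝ) {n : ℕ} (x : Fin n → ℝ) : ℂ :=
  Complex.exp (Complex.I * ((Real.pi * (∑ i, x i ^ 2) * (Real.cos α / Real.sin α) : ℝ) : ℂ))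

/-- `A_α = √(1 - i cot α)`. -/
def Acoef (α : ℝ) : ℂ := (1 - Complex.I * ((Real.cos α / Real.sin α : ℝ) : ℂ)) ^ (1 / 2 : ℂ)

/-- The kernel `K_α(m,x) = A_α^n e_α(x) e^{-2π i (m·x) csc α} e_α(m)`. -/
def Kk (α : ℝ) {n : ℕ} (m : Fin n → ℤ) (x : Fin n → ℝ) : ℂ :=
  Acoef α ^ n * eA α x *
    Complex.exp (-(Complex.I * ((2 * Real.pi * (∑ i, (m i : ℝ) * x i) / Real.sin α : ℝ) : ℂ))) *
    eA α fun i => (m i : ℝ)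

/-- The `m`-th fractional Fourier coefficient of order `α`. -/
def Fcoef (α : ℝ) {n : ℕ} (f : (Fin n → ℝ) → ℂ) (m : Fin n → ℤ) : ℂ :=
  ∫ x in Tor α n, f x * Kk α m x

/-- `|sin α|`-periodicity in every coordinate. -/
def Per (α : ℝ) {n : ℕ} (f : (Fin n → ℝ) → ℂ) : Prop :=
  ∀ (x : Fin n → ℝ) (k : Fin n → ℤ), f (fun i => x i + k i * |Real.sin α|) = f x

open Set Topology UnitAddTorus

section Orthogonality

variable {X : Type*} [TopologicalSpace X] [MeasurableSpace X] {μ : Measure X} {H : X → ℂ}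

theorem ae_eq_zero_of_forall_integral_mul_eq_zero [HasOuterApproxClosed X] [BorelSpace X]
    (hH : Integrable H μ) (h : ∀ φ : C(X, ℂ), ∫ x, φ x * H x ∂μ = 0) : H =ᵐ[μ] 0 := by
  refine ae_eq_zero_of_forall_setIntegral_isClosed_eq_zero hH fun s hs => ?_
  let φ : ℕ → C(X, ℂ) := fun k =>
    ⟨fun x => ((hs.apprSeq k x : ℝ) : ℂ), by fun_prop⟩
  have hlim : Tendsto (fun k => ∫ x, φ k x * H x ∂μ) atTop (𝓝 (∫ x in s, H x ∂μ)) := by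
    rw [← integral_indicator hs.measurableSet]
    refine tendsto_integral_of_dominated_convergence (fun x => ‖H x‖)
      (fun k => (φ k).continuous.aestronglyMeasurable.mul hH.aestronglyMeasurable) hH.norm
      (fun k => ae_of_all _ fun x => ?_) (ae_of_all _ fun x => ?_)
    · rw [norm_mul]
      refine mul_le_of_le_one_left (norm_nonneg _) ?_
      simpa [φ] using HasOuterApproxClosed.apprSeq_apply_le_one hs k x
    · have hx := tendsto_pi_nhds.1 (HasOuterApproxClosed.tendsto_apprSeq hs) x
      have := ((Complex.continuous_ofReal.comp NNReal.continuous_coe).tendsto _).comp hx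
        |>.mul_const (H x)
      by_cases hxs : x ∈ s <;> simpa [φ, hxs] using this
  simp only [h] at hlim
  exact (tendsto_const_nhds_iff.mp hlim).symm

theorem integral_mul_eq_zero_of_dense_span [CompactSpace X] [OpensMeasurableSpace X]
    (hH : Integrable H μ) {S : Set C(X, ℂ)} (hS : (Submodule.span ℂ S).topologicalClosure = ⊤)
    (h : ∀ φ ∈ S, ∫ x, φ x * H x ∂μ = 0) (φ : C(X, ℂ)) : ∫ x, φ x * H x ∂μ = 0 := by
  have hint (ψ : C(X, ℂ)) : Integrable (fun x => ψ x * H x) μ :=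
    hH.bdd_mul ψ.continuous.aestronglyMeasurable (ae_of_all _ ψ.norm_coe_le_norm)
  let L : C(X, ℂ) →ₗ[ℂ] ℂ :=
    { toFun := fun ψ => ∫ x, ψ x * H x ∂μ
      map_add' := fun ψ χ => by
        simp only [ContinuousMap.add_apply, add_mul, integral_add (hint ψ) (hint χ)]
      map_smul' := fun c ψ => by
        simp only [ContinuousMap.smul_apply, smul_eq_mul, mul_assoc, integral_const_mul,
          RingHom.id_apply] }
  have hL (ψ : C(X, ℂ)) : ‖L ψ‖ ≤ (∫ x, ‖H x‖ ∂μ) * ‖ψ‖ := by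
    calc ‖∫ x, ψ x * H x ∂μ‖ ≤ ∫ x, ‖ψ‖ * ‖H x‖ ∂μ :=
          norm_integral_le_of_norm_le (hH.norm.const_mul _) (ae_of_all _ fun x => by
            rw [norm_mul]; exact mul_le_mul_of_nonneg_right (ψ.norm_coe_le_norm x) (norm_nonneg _))
      _ = (∫ x, ‖H x‖ ∂μ) * ‖ψ‖ := by rw [integral_const_mul, mul_comm]
  have hker : (Submodule.span ℂ S).topologicalClosure ≤ (L.mkContinuous _ hL).ker :=
    Submodule.topologicalClosure_minimal _ (Submodule.span_le.2 h)
      (ContinuousLinearMap.isClosed_ker _)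
  exact hker (hS ▸ Submodule.mem_top)

end Orthogonality

namespace UnitAddTorus

variable {ι : Type*}

theorem ae_eq_zero_of_forall_integral_mFourier_mul_eq_zero [Fintype ι]
    {μ : Measure (UnitAddTorus ι)} {H : UnitAddTorus ι → ℂ} (hH : Integrable H μ)
    (h : ∀ m : ι → ℤ, ∫ y, mFourier m y * H y ∂μ = 0) : H =ᵐ[μ] 0 :=
  ae_eq_zero_of_forall_integral_mul_eq_zero hH <|
    integral_mul_eq_zero_of_dense_span hH span_mFourier_closure_eq_top <| by
      rintro _ ⟨m, rfl⟩
      exact h m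

theorem integrable_mFourier_comp_mul [Fintype ι] {X : Type*} [MeasurableSpace X]
    {μ : Measure X} (m : ι → ℤ) {q : X → UnitAddTorus ι} (hq : Measurable q) {u : X → ℂ}
    (hu : Integrable u μ) : Integrable (fun x => mFourier m (q x) * u x) μ :=
  hu.bdd_mul ((mFourier m).continuous.measurable.comp hq).aestronglyMeasurable
    (ae_of_all _ fun _ => (mFourier m).norm_coe_le_norm _ |>.trans_eq mFourier_norm)

theorem ae_eq_zero_of_forall_integral_mFourier_comp_mul_eq_zero [Fintype ι] {X : Type*}
    [MeasurableSpace X] {μ : Measure X} {q : X → UnitAddTorus ι} {ρ : UnitAddTorus ι → X}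
    (hq : Measurable q) (hρ : Measurable ρ) (hρq : ∀ᵐ x ∂μ, ρ (q x) = x) {d : X → ℂ} (hd : Integrable d μ)
    (h : ∀ m : ι → ℤ, ∫ x, mFourier m (q x) * d x ∂μ = 0) : d =ᵐ[μ] 0 := by
  -- `d` agrees a.e. with `(d ∘ ρ) ∘ q`, so it suffices that `d ∘ ρ` vanishes a.e. for `μ.map q`.
  have hmap : (μ.map q).map ρ = μ := by
    rw [Measure.map_map hρ hq, Measure.map_congr (f := ρ ∘ q) hρq, Measure.map_id']
  have hdρ : AEStronglyMeasurable (d ∘ ρ) (μ.map q) :=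
    (hmap ▸ hd.aestronglyMeasurable).comp_aemeasurable hρ.aemeasurable
  have hdρq : (d ∘ ρ) ∘ q =ᵐ[μ] d := by
    filter_upwards [hρq] with x hx
    simp [hx]
  have hzero : d ∘ ρ =ᵐ[μ.map q] 0 := by
    refine ae_eq_zero_of_forall_integral_mFourier_mul_eq_zero
      ((integrable_map_measure hdρ hq.aemeasurable).2 (hd.congr hdρq.symm)) fun m => ?_
    have hφ : AEStronglyMeasurable (fun y => mFourier m y * (d ∘ ρ) y) (μ.map q) :=
      (mFourier m).continuous.aestronglyMeasurable.mul hdρ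
    rw [integral_map hq.aemeasurable hφ, ← h m]
    exact integral_congr_ae (hdρq.mono fun x hx => by simp only [← hx, Function.comp_apply])
  exact hdρq.symm.trans (ae_eq_comp hq.aemeasurable hzero)

def mkScaled (c : ℝ) (x : ι → ℝ) : UnitAddTorus ι := fun i => ((x i / c : ℝ) : UnitAddCircle)

def liftScaled (c : ℝ) (y : UnitAddTorus ι) : ι → ℝ :=
  c • (measurableEquivPiIoc (fun _ => -(1 / 2)) y : ι → ℝ)

theorem measurable_mkScaled (c : ℝ) : Measurable (mkScaled (ι := ι) c) :=
  measurable_pi_lambda _ fun i => AddCircle.measurable_mk'.comp (by fun_prop)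

theorem measurable_liftScaled (c : ℝ) : Measurable (liftScaled (ι := ι) c) :=
  (measurable_subtype_coe.comp (measurableEquivPiIoc _).measurable).const_smul c

theorem liftScaled_mkScaled {c : ℝ} {x : ι → ℝ} (hx : ∀ i, |x i| < |c| / 2) :
    liftScaled c (mkScaled c x) = x := by
  funext i
  have hc : c ≠ 0 := abs_pos.1 (by linarith [abs_nonneg (x i), hx i])
  have hmem : x i / c ∈ Ioc (-(1 / 2)) (-(1 / 2) + 1) := by
    have : |x i / c| < 1 / 2 := by
      rw [abs_div, div_lt_iff₀ (abs_pos.2 hc)]; linarith [hx i]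
    constructor <;> linarith [abs_lt.1 this]
  simp [liftScaled, mkScaled, AddCircle.equivIoc_coe_of_mem hmem, mul_div_cancel₀ _ hc]

theorem mFourier_mkScaled [Fintype ι] (c : ℝ) (m : ι → ℤ) (x : ι → ℝ) :
    mFourier m (mkScaled c x) =
      Complex.exp (Complex.I * ((2 * Real.pi * (∑ i, (m i : ℝ) * x i) / c : ℝ) : ℂ)) := by
  simp only [mFourier, mkScaled, ContinuousMap.coe_mk, fourier_coe_apply, ← Complex.exp_sum]
  congr 1
  push_cast
  rw [Finset.mul_sum, Finset.sum_div, Finset.mul_sum]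
  refine Finset.sum_congr rfl fun i _ => ?_
  ring

end UnitAddTorus

theorem ae_restrict_pi_Icc_abs_lt {ι : Type*} [Fintype ι] (r : ℝ) :
    ∀ᵐ x ∂(volume.restrict (univ.pi fun _ : ι => Icc (-r) r)), ∀ i, |x i| < r := by
  rw [volume_pi, Measure.restrict_congr_set Measure.pi_Ioo_ae_eq_pi_Icc.symm]
  filter_upwards [ae_restrict_mem (MeasurableSet.univ_pi fun _ => measurableSet_Ioo)] with x hx i
  exact abs_lt.2 (hx i (mem_univ i))

theorem eA_ne_zero (α : ℝ) {n : ℕ} (x : Fin n → ℝ) : eA α x ≠ 0 := Complex.exp_ne_zero _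

theorem Acoef_ne_zero (α : ℝ) : Acoef α ≠ 0 := by
  rw [Acoef, Ne, Complex.cpow_eq_zero_iff, not_and]
  intro h
  simpa only [Complex.sub_re, Complex.one_re, Complex.mul_re, Complex.I_re, Complex.I_im,
    Complex.ofReal_re, Complex.ofReal_im, Complex.zero_re, zero_mul, one_mul, sub_zero,
    one_ne_zero] using congrArg Complex.re h

theorem Fcoef_eq_mul_integral_mFourier (α : ℝ) {n : ℕ} (u : (Fin n → ℝ) → ℂ) (m : Fin n → ℤ) :
    Fcoef α u m = Acoef α ^ n * eA α (fun i => (m i : ℝ)) *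
      ∫ x in Tor α n, mFourier (-m) (mkScaled (Real.sin α) x) * (eA α x * u x) := by
  rw [Fcoef, ← integral_const_mul]
  congr 1
  funext x
  rw [mFourier_mkScaled, Kk]
  simp only [Pi.neg_apply, Int.cast_neg, neg_mul, Finset.sum_neg_distrib, mul_neg, neg_div,
    Complex.ofReal_neg]
  ring

theorem stmt13_general (α : ℝ) (n : ℕ)
    (f g : (Fin n → ℝ) → ℂ)
    (hf : IntegrableOn (fun x => eA α x * f x) (Tor α n))
    (hg : IntegrableOn (fun x => eA α x * g x) (Tor α n))
    (h : ∀ m : Fin n → ℤ, Fcoef α f m = Fcoef α g m) :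
    ∀ᵐ x ∂(volume.restrict (Tor α n)), f x = g x := by
  have horth (m : Fin n → ℤ) : ∫ x in Tor α n,
      mFourier m (mkScaled (Real.sin α) x) * (eA α x * f x - eA α x * g x) = 0 := by
    have hm := h (-m)
    rw [Fcoef_eq_mul_integral_mFourier, Fcoef_eq_mul_integral_mFourier, neg_neg] at hm
    simp only [mul_sub]
    rw [integral_sub (integrable_mFourier_comp_mul m (measurable_mkScaled _) hf)
        (integrable_mFourier_comp_mul m (measurable_mkScaled _) hg),
      mul_left_cancel₀ (mul_ne_zero (pow_ne_zero _ (Acoef_ne_zero α)) (eA_ne_zero α _)) hm,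
      sub_self]
  filter_upwards [ae_eq_zero_of_forall_integral_mFourier_comp_mul_eq_zero
    (measurable_mkScaled _) (measurable_liftScaled _)
    ((ae_restrict_pi_Icc_abs_lt _).mono fun x hx => liftScaled_mkScaled hx) (hf.sub hg) horth]
    with x hx
  exact mul_left_cancel₀ (eA_ne_zero α x) (sub_eq_zero.1 hx)

theorem stmt13 (α : ℝ) (hα : ∀ k : ℤ, α ≠ k * Real.pi) (n : ℕ)
    (f g : (Fin n → ℝ) → ℂ)
    (hperf : Per α fun x => eA α x * f x) (hperg : Per α fun x => eA α x * g x)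
    (hf : IntegrableOn (fun x => eA α x * f x) (Tor α n))
    (hg : IntegrableOn (fun x => eA α x * g x) (Tor α n))
    (h : ∀ m : Fin n → ℤ, Fcoef α f m = Fcoef α g m) :
    ∀ᵐ x ∂(volume.restrict (Tor α n)), f x = g x :=
  stmt13_general α n f g hf hg h
end
end

section
/- Fractional Riemann–Lebesgue lemma: for f ∈ e_{-α}L^1(T^n_α), |F_α(f)(m)| → 0 as |m| → ∞. -/
open MeasureTheory Filter

noncomputable section

/-! Extending `e_α f` by zero off the torus, `F_α(f)(m)` is, up to the constant `A_α^n` and the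
unimodular factor `e_α(m)`, the Euclidean Fourier transform of that function at the frequency
`m csc α`. As `m ↦ m csc α` carries the cofinite filter of `ℤⁿ` to the cocompact filter of the
dual space, the classical Riemann–Lebesgue lemma gives the decay. -/

theorem norm_eA (α : ℝ) {n : ℕ} (x : Fin n → ℝ) : ‖eA α x‖ = 1 := by
  rw [eA, mul_comm, Complex.norm_exp_ofReal_mul_I]

theorem Filter.Tendsto.cocompact_of_comp {X Y ι : Type*} [TopologicalSpace X]
    [TopologicalSpace Y] {g : X → Y} (hg : Continuous g) {f : ι → X} {l : Filter ι}
    (h : Tendsto (g ∘ f) l (cocompact Y)) : Tendsto f l (cocompact X) :=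
  (tendsto_comap_iff.2 h).mono_right (comap_cocompact_le hg)

theorem tendsto_intCast_pi_cofinite_cocompact {ι : Type*} [Finite ι] :
    Tendsto (fun m : ι → ℤ => fun i => (m i : ℝ)) cofinite (cocompact (ι → ℝ)) := by
  rw [← coprodᵢ_cofinite, ← coprodᵢ_cocompact]
  exact Tendsto.pi_map_coprodᵢ fun _ => Int.tendsto_coe_cofinite

section LatticeFrequency

variable {ι : Type*} [Fintype ι]

def latticeFrequency (s : ℝ) (m : ι → ℤ) : (ι → ℝ) →L[ℝ] ℝ :=
  s⁻¹ • ∑ i, (m i : ℝ) • ContinuousLinearMap.proj i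

theorem latticeFrequency_apply (s : ℝ) (m : ι → ℤ) (x : ι → ℝ) :
    latticeFrequency s m x = (∑ i, (m i : ℝ) * x i) / s := by
  simp [latticeFrequency, div_eq_inv_mul]

theorem tendsto_latticeFrequency_cofinite_cocompact {s : ℝ} (hs : s ≠ 0) :
    Tendsto (latticeFrequency (ι := ι) s) cofinite (cocompact _) := by
  classical
  refine Tendsto.cocompact_of_comp (g := fun w i => s * w (Pi.single i 1)) (by fun_prop) ?_
  convert tendsto_intCast_pi_cofinite_cocompact (ι := ι) using 1
  ext m i
  simp [latticeFrequency_apply, Pi.single_apply, mul_div_cancel₀ _ hs]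

theorem tendsto_integral_exp_latticeFrequency {s : ℝ} (hs : s ≠ 0) (g : (ι → ℝ) → ℂ) :
    Tendsto (fun m : ι → ℤ => ∫ x,
        Complex.exp (-(Complex.I * ((2 * Real.pi * (∑ i, (m i : ℝ) * x i) / s : ℝ) : ℂ))) * g x)
      cofinite (nhds 0) := by
  refine ((tendsto_integral_exp_smul_cocompact g volume).comp
    (tendsto_latticeFrequency_cofinite_cocompact hs)).congr fun m => integral_congr_ae ?_
  refine .of_forall fun x => ?_
  simp only [Circle.smul_def, Real.fourierChar_apply, latticeFrequency_apply]
  push_cast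
  ring_nf

end LatticeFrequency

theorem norm_Fcoef (α : ℝ) {n : ℕ} (f : (Fin n → ℝ) → ℂ) (m : Fin n → ℤ) :
    ‖Fcoef α f m‖ = ‖Acoef α ^ n‖ * ‖∫ x,
      Complex.exp (-(Complex.I * ((2 * Real.pi * (∑ i, (m i : ℝ) * x i) / Real.sin α : ℝ) : ℂ))) *
        (Tor α n).indicator (fun x => eA α x * f x) x‖ := by
  have hTor : MeasurableSet (Tor α n) := MeasurableSet.univ_pi fun _ => measurableSet_Icc
  have hKk : (fun x => f x * Kk α m x) = fun x => (Acoef α ^ n * eA α fun i => (m i : ℝ)) *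
      (Complex.exp (-(Complex.I * ((2 * Real.pi * (∑ i, (m i : ℝ) * x i) / Real.sin α : ℝ) : ℂ))) *
        (eA α x * f x)) := by
    ext x
    rw [Kk]
    ring
  rw [Fcoef, hKk, integral_const_mul, norm_mul, norm_mul, norm_eA, mul_one,
    ← integral_indicator hTor]
  simp only [Set.indicator_mul_right]

theorem stmt18_general (α : ℝ) (hα : ∀ k : ℤ, α ≠ k * Real.pi) (n : ℕ)
    (f : (Fin n → ℝ) → ℂ) :
    Tendsto (fun m : Fin n → ℤ => ‖Fcoef α f m‖) cofinite (nhds 0) := by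
  have hs : Real.sin α ≠ 0 := Real.sin_ne_zero_iff.2 fun k hk => hα k hk.symm
  simpa [norm_Fcoef] using
    ((tendsto_integral_exp_latticeFrequency hs _).norm.const_mul ‖Acoef α ^ n‖)

theorem stmt18 (α : ℝ) (hα : ∀ k : ℤ, α ≠ k * Real.pi) (n : ℕ)
    (f : (Fin n → ℝ) → ℂ)
    (hper : Per α fun x => eA α x * f x)
    (hf : IntegrableOn (fun x => eA α x * f x) (Tor α n)) :
    Tendsto (fun m : Fin n → ℤ => ‖Fcoef α f m‖) cofinite (nhds 0) :=
  stmt18_general α hα n f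
end
end
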